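/- arXiv:1806.01204 — 3 statements merged into one kernel-verified Lean document; each statement's English description precedes it below -/
import Mathlib

section
/- Let n ≥ 1 and let 0 = V_0 ≤ V_1 ≤ … ≤ V_n be real numbers with V_n > 0. For t ∈ [0,1] let k(t) ∈ {0, 1, …, n} satisfy V_{k(t)} ≤ t V_n, and additionally t V_n < V_{k(t)+1} whenever k(t) < n. Then for all t ∈ [0,1], |k(t) − ⌊nt⌋| ≤ 2 n max_{0≤j≤n} |V_j − j/n| + 2. -/
/-!
Write `M = max_{j ≤ n} |V j - j/n|`, so that `|n V j - j| ≤ n M` for every `j ≤ n`; at `j = n`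
this gives `|n t V n - n t| ≤ n M`. The left inequality `V k ≤ t V n` then yields
`k ≤ n t + 2 n M`, and the right one `t V n < V (k + 1)` yields `n t ≤ k + 1 + 2 n M`.
Since `⌊n t⌋` lies within `1` of `n t`, both bounds together give `|k - ⌊n t⌋| ≤ 2 n M + 1`.
-/

open Set

lemma abs_natCast_sub_floor_le {x c : ℝ} {k : ℕ} (hx : 0 ≤ x) (hk : (k : ℝ) ≤ x + c)
    (hx' : x ≤ k + 1 + c) : |(k : ℝ) - ⌊x⌋₊| ≤ c + 1 := by
  have := Nat.floor_le hx
  have := Nat.lt_floor_add_one x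
  rw [abs_le]
  constructor <;> linarith

section UniformDeviation

variable {n : ℕ} {V : ℕ → ℝ} {M : ℝ} (hn : 0 < n) (hM : ∀ j ≤ n, |V j - j / n| ≤ M)
include hn hM

lemma abs_mul_sub_natCast_le {j : ℕ} (hj : j ≤ n) : |n * V j - j| ≤ n * M := by
  have hn' : (0 : ℝ) < n := Nat.cast_pos.mpr hn
  calc |n * V j - j| = n * |V j - j / n| := by
        rw [show (n : ℝ) * V j - j = n * (V j - j / n) by field_simp, abs_mul, abs_of_pos hn']
    _ ≤ n * M := by gcongr; exact hM j hj

lemma abs_mul_mul_sub_le {t : ℝ} (ht : t ∈ Icc (0 : ℝ) 1) :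
    |n * (t * V n) - n * t| ≤ n * M := by
  have hnM : |n * V n - n| ≤ n * M := abs_mul_sub_natCast_le hn hM le_rfl
  calc |n * (t * V n) - n * t| = t * |n * V n - n| := by
        rw [show n * (t * V n) - n * t = t * (n * V n - n) by ring, abs_mul, abs_of_nonneg ht.1]
    _ ≤ 1 * (n * M) := by gcongr; exact ht.2
    _ = n * M := one_mul _

lemma natCast_le_mul_add {t : ℝ} (ht : t ∈ Icc (0 : ℝ) 1) {k : ℕ} (hkn : k ≤ n)
    (hk : V k ≤ t * V n) : (k : ℝ) ≤ n * t + 2 * n * M := by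
  have hVk := abs_le.mp (abs_mul_sub_natCast_le hn hM hkn)
  have hVn := abs_le.mp (abs_mul_mul_sub_le hn hM ht)
  have : n * V k ≤ n * (t * V n) := by gcongr
  linarith [hVk.1, hVn.2]

lemma mul_le_natCast_add {t : ℝ} (ht : t ∈ Icc (0 : ℝ) 1) {k : ℕ} (hkn : k ≤ n)
    (hk : k < n → t * V n < V (k + 1)) : n * t ≤ k + 1 + 2 * n * M := by
  have hM0 : 0 ≤ M := (abs_nonneg _).trans (hM 0 n.zero_le)
  rcases hkn.lt_or_eq with hlt | rfl
  · have hVk := abs_le.mp (abs_mul_sub_natCast_le hn hM hlt)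
    have hVn := abs_le.mp (abs_mul_mul_sub_le hn hM ht)
    have : n * (t * V n) ≤ n * V (k + 1) := by gcongr; exact (hk hlt).le
    push_cast at hVk
    linarith [hVk.2, hVn.1]
  · have : (k : ℝ) * t ≤ k := mul_le_of_le_one_right k.cast_nonneg ht.2
    have : 0 ≤ (k : ℝ) * M := by positivity
    linarith

end UniformDeviation

theorem index_comparison_estimate_general
    (n : ℕ) (hn : 1 ≤ n) (V : ℕ → ℝ)
    (k : ℝ → ℕ)
    (hkn : ∀ t ∈ Set.Icc (0:ℝ) 1, k t ≤ n)
    (hk1 : ∀ t ∈ Set.Icc (0:ℝ) 1, V (k t) ≤ t * V n)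
    (hk2 : ∀ t ∈ Set.Icc (0:ℝ) 1, k t < n → t * V n < V (k t + 1)) :
    ∀ t ∈ Set.Icc (0:ℝ) 1,
      |(k t : ℝ) - (⌊(n:ℝ) * t⌋₊ : ℝ)| ≤
        2 * n * ((Finset.range (n+1)).sup' Finset.nonempty_range_add_one
          (fun j => |V j - (j:ℝ)/(n:ℝ)|)) + 2 := by
  intro t ht
  set M := (Finset.range (n+1)).sup' Finset.nonempty_range_add_one
    (fun j => |V j - (j:ℝ)/(n:ℝ)|)
  have hM : ∀ j ≤ n, |V j - j / n| ≤ M := fun j hj =>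
    Finset.le_sup' (fun j => |V j - (j:ℝ)/(n:ℝ)|) (Finset.mem_range_succ_iff.mpr hj)
  calc |(k t : ℝ) - ⌊(n:ℝ) * t⌋₊| ≤ 2 * n * M + 1 :=
        abs_natCast_sub_floor_le (mul_nonneg n.cast_nonneg ht.1)
          (natCast_le_mul_add hn hM ht (hkn t ht) (hk1 t ht))
          (mul_le_natCast_add hn hM ht (hkn t ht) (hk2 t ht))
    _ ≤ 2 * n * M + 2 := by linarith

/-- **Deterministic estimate underlying Proposition 4.5.**
Let `0 = V 0 ≤ V 1 ≤ … ≤ V n` with `V n > 0`.  For `t ∈ [0,1]` let `k t ∈ {0,…,n}`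
satisfy `V (k t) ≤ t * V n`, and `t * V n < V (k t + 1)` whenever `k t < n`.  Then
`|k t − ⌊n t⌋| ≤ 2 n max_{0 ≤ j ≤ n} |V j − j/n| + 2` for all `t ∈ [0,1]`. -/
theorem index_comparison_estimate
    (n : ℕ) (hn : 1 ≤ n) (V : ℕ → ℝ)
    (hV0 : V 0 = 0)
    (hmono : ∀ i j : ℕ, i ≤ j → j ≤ n → V i ≤ V j)
    (hpos : 0 < V n)
    (k : ℝ → ℕ)
    (hkn : ∀ t ∈ Set.Icc (0:ℝ) 1, k t ≤ n)
    (hk1 : ∀ t ∈ Set.Icc (0:ℝ) 1, V (k t) ≤ t * V n)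
    (hk2 : ∀ t ∈ Set.Icc (0:ℝ) 1, k t < n → t * V n < V (k t + 1)) :
    ∀ t ∈ Set.Icc (0:ℝ) 1,
      |(k t : ℝ) - (⌊(n:ℝ) * t⌋₊ : ℝ)| ≤
        2 * n * ((Finset.range (n+1)).sup' Finset.nonempty_range_add_one
          (fun j => |V j - (j:ℝ)/(n:ℝ)|)) + 2 :=
  index_comparison_estimate_general n hn V k hkn hk1 hk2
end

section
/- Let (Λ, μ) be a probability space, T : Λ → Λ a measure-preserving transformation, v : Λ → ℝ measurable, and q ≥ 1. Define v_ℓ = Σ_{j=0}^{ℓ−1} v∘T^j and Z_n = max_{0 ≤ i, ℓ ≤ n^{1/2}} |v_ℓ| ∘ T^{i⌊n^{1/2}⌋}. Suppose there is K > 0 such that ‖max_{ℓ≤n} |v_ℓ|‖_{L^q(μ)} ≤ K n^{1/2} for all n ≥ 1. Then there is a constant C > 0 depending only on q such that ‖Z_n‖_{L^q(μ)} ≤ C K n^{1/4 + 1/(2q)} for all n ≥ 1. -/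
/-!
Split the index `i` of `Z_n` off: with `m = ⌊√n⌋`, `Z_n` is the maximum over `i ≤ m` of
`M_m ∘ T^{im}`, where `M_m = max_{ℓ ≤ m} |v_ℓ|`. Bounding `|Z_n|^q` by the sum of the
`(M_m ∘ T^{im})^q` and using that `T` preserves `μ` gives
`‖Z_n‖_q ≤ (m + 1)^{1/q} ‖M_m‖_q ≤ (2√n)^{1/q} K m^{1/2} ≤ 2^{1/q} K n^{1/4 + 1/(2q)}`.
-/

open MeasureTheory ProbabilityTheory Filter Topology

noncomputable section

/-- Birkhoff sums `v_ℓ = ∑_{j<ℓ} v ∘ T^j`. -/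
def birkhoff {Λ : Type*} (T : Λ → Λ) (v : Λ → ℝ) (n : ℕ) (x : Λ) : ℝ :=
  ∑ j ∈ Finset.range n, v (T^[j] x)

/-- `Z_n = max_{0 ≤ i,ℓ ≤ √n} |v_ℓ| ∘ T^{i⌊√n⌋}` (pointwise). -/
def Zmax {Λ : Type*} (T : Λ → Λ) (v : Λ → ℝ) (n : ℕ) (x : Λ) : ℝ :=
  ((Finset.range (⌊Real.sqrt n⌋₊ + 1)) ×ˢ (Finset.range (⌊Real.sqrt n⌋₊ + 1))).sup'
    (Finset.nonempty_range_add_one.product Finset.nonempty_range_add_one)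
    (fun q => |birkhoff T v q.2 (T^[q.1 * ⌊Real.sqrt n⌋₊] x)|)

open scoped ENNReal

theorem eLpNorm_sup'_le {α ι : Type*} [MeasurableSpace α] {μ : Measure α} {p : ℝ≥0∞}
    {s : Finset ι} (hs : s.Nonempty) {f : ι → α → ℝ}
    (hf : ∀ i ∈ s, AEStronglyMeasurable (f i) μ) {C : ℝ≥0∞}
    (hC : ∀ i ∈ s, eLpNorm (f i) p μ ≤ C) (hp : p ≠ ∞) :
    eLpNorm (fun x => s.sup' hs (f · x)) p μ ≤ (s.card : ℝ≥0∞) ^ (1 / p.toReal) * C := by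
  rcases eq_or_ne p 0 with rfl | hp0
  · simp
  have hp_pos : 0 < p.toReal := ENNReal.toReal_pos hp0 hp
  have hpt : ∀ x, ‖s.sup' hs (f · x)‖ₑ ^ p.toReal ≤ ∑ i ∈ s, ‖f i x‖ₑ ^ p.toReal := fun x => by
    obtain ⟨j, hj, hsup⟩ := s.exists_mem_eq_sup' hs (f · x)
    rw [hsup]
    exact Finset.single_le_sum (f := fun i => ‖f i x‖ₑ ^ p.toReal) (fun _ _ => zero_le) hj
  have hfC : ∀ i ∈ s, ∫⁻ x, ‖f i x‖ₑ ^ p.toReal ∂μ ≤ C ^ p.toReal := fun i hi => by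
    rw [lintegral_rpow_enorm_eq_rpow_eLpNorm' hp_pos, ← eLpNorm_eq_eLpNorm' hp0 hp]
    gcongr
    exact hC i hi
  have hint : ∫⁻ x, ‖s.sup' hs (f · x)‖ₑ ^ p.toReal ∂μ ≤ s.card * C ^ p.toReal := calc
    _ ≤ ∫⁻ x, ∑ i ∈ s, ‖f i x‖ₑ ^ p.toReal ∂μ := lintegral_mono hpt
    _ = ∑ i ∈ s, ∫⁻ x, ‖f i x‖ₑ ^ p.toReal ∂μ :=
      lintegral_finsetSum' _ fun i hi => (hf i hi).enorm.pow_const _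
    _ ≤ ∑ i ∈ s, C ^ p.toReal := Finset.sum_le_sum hfC
    _ = s.card * C ^ p.toReal := by simp
  rw [eLpNorm_eq_lintegral_rpow_enorm_toReal hp0 hp]
  calc _ ≤ (s.card * C ^ p.toReal) ^ (1 / p.toReal) := by gcongr
    _ = _ := by
      rw [ENNReal.mul_rpow_of_nonneg _ _ (by positivity), ← ENNReal.rpow_mul,
        mul_one_div_cancel hp_pos.ne', ENNReal.rpow_one]

theorem natFloor_sqrt_add_one_le {x : ℝ} (hx : 1 ≤ x) : (⌊√x⌋₊ : ℝ) + 1 ≤ 2 * √x := by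
  have hfloor : (⌊√x⌋₊ : ℝ) ≤ √x := Nat.floor_le (Real.sqrt_nonneg x)
  have hsqrt : 1 ≤ √x := Real.one_le_sqrt.mpr hx
  linarith

theorem natFloor_sqrt_add_one_rpow_mul_le {x q : ℝ} (hx : 1 ≤ x) (hq : 0 < q) :
    ((⌊√x⌋₊ : ℝ) + 1) ^ (1 / q) * (⌊√x⌋₊ : ℝ) ^ ((1 : ℝ) / 2)
      ≤ 2 ^ (1 / q) * x ^ ((1 : ℝ) / 4 + 1 / (2 * q)) := by
  have hx0 : 0 ≤ x := zero_le_one.trans hx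
  calc ((⌊√x⌋₊ : ℝ) + 1) ^ (1 / q) * (⌊√x⌋₊ : ℝ) ^ ((1 : ℝ) / 2)
      ≤ (2 * √x) ^ (1 / q) * (√x) ^ ((1 : ℝ) / 2) := by
        gcongr
        · exact natFloor_sqrt_add_one_le hx
        · exact Nat.floor_le (Real.sqrt_nonneg x)
    _ = 2 ^ (1 / q) * x ^ ((1 : ℝ) / 4 + 1 / (2 * q)) := by
        rw [Real.mul_rpow zero_le_two (Real.sqrt_nonneg x), Real.sqrt_eq_rpow,
          ← Real.rpow_mul hx0, ← Real.rpow_mul hx0, mul_assoc, ← Real.rpow_add' hx0]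
        · ring_nf
        · positivity

section Birkhoff

variable {Λ : Type*} {T : Λ → Λ} {v : Λ → ℝ}

def maxBirkhoff (T : Λ → Λ) (v : Λ → ℝ) (n : ℕ) (x : Λ) : ℝ :=
  (Finset.range (n + 1)).sup' Finset.nonempty_range_add_one fun ℓ => |birkhoff T v ℓ x|

theorem measurable_birkhoff [MeasurableSpace Λ] (hT : Measurable T) (hv : Measurable v) (n : ℕ) :
    Measurable (birkhoff T v n) :=
  Finset.measurable_sum _ fun j _ => hv.comp (hT.iterate j)

theorem measurable_maxBirkhoff [MeasurableSpace Λ] (hT : Measurable T) (hv : Measurable v)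
    (n : ℕ) : Measurable (maxBirkhoff T v n) :=
  Finset.measurable_range_sup'' fun ℓ _ => (measurable_birkhoff hT hv ℓ).abs

theorem Zmax_eq_sup'_maxBirkhoff_iterate (n : ℕ) (x : Λ) :
    Zmax T v n x = (Finset.range (⌊√n⌋₊ + 1)).sup' Finset.nonempty_range_add_one
      fun i => maxBirkhoff T v ⌊√n⌋₊ (T^[i * ⌊√n⌋₊] x) :=
  Finset.sup'_product_left _ _

theorem eLpNorm_Zmax_le [MeasurableSpace Λ] {μ : Measure Λ} {p : ℝ≥0∞}
    (hT : MeasurePreserving T μ μ) (hv : Measurable v) (hp : p ≠ ∞) (n : ℕ) :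
    eLpNorm (Zmax T v n) p μ
      ≤ ((⌊√n⌋₊ + 1 : ℕ) : ℝ≥0∞) ^ (1 / p.toReal) * eLpNorm (maxBirkhoff T v ⌊√n⌋₊) p μ := by
  have hM := measurable_maxBirkhoff hT.measurable hv ⌊√n⌋₊
  rw [funext (Zmax_eq_sup'_maxBirkhoff_iterate n)]
  simpa only [Finset.card_range, Function.comp_apply] using
    eLpNorm_sup'_le Finset.nonempty_range_add_one
      (fun i _ => (hM.comp (hT.measurable.iterate _)).aestronglyMeasurable)
      (fun i _ => (eLpNorm_comp_measurePreserving hM.aestronglyMeasurable (hT.iterate _)).le) hp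

end Birkhoff

theorem Zmax_Lq_estimate_general (q : ℝ) :
    ∃ C : ℝ, 0 < C ∧
      ∀ (Λ : Type) (mΛ : MeasurableSpace Λ) (μ : Measure Λ)
        (_ : IsProbabilityMeasure μ) (T : Λ → Λ) (_ : MeasurePreserving T μ μ)
        (v : Λ → ℝ) (_ : Measurable v) (K : ℝ) (_ : 0 < K),
        (∀ n : ℕ, 1 ≤ n →
          eLpNorm (fun x => (Finset.range (n+1)).sup' Finset.nonempty_range_add_one
              (fun ℓ => |birkhoff T v ℓ x|)) (ENNReal.ofReal q) μ
            ≤ ENNReal.ofReal (K * (n:ℝ) ^ ((1:ℝ)/2))) →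
        ∀ n : ℕ, 1 ≤ n →
          eLpNorm (Zmax T v n) (ENNReal.ofReal q) μ
            ≤ ENNReal.ofReal (C * K * (n:ℝ) ^ ((1:ℝ)/4 + 1/(2*q))) := by
  refine ⟨2 ^ (1 / q), by positivity, ?_⟩
  intro Λ _ μ _ T hT v hv K hK hmax n hn
  rcases le_or_gt q 0 with hq | hq
  -- `ENNReal.ofReal q = 0` here, and every `eLpNorm _ 0` vanishes
  · rw [ENNReal.ofReal_of_nonpos hq, eLpNorm_exponent_zero]
    exact zero_le
  have hn1 : (1 : ℝ) ≤ n := by exact_mod_cast hn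
  set m := ⌊√(n : ℝ)⌋₊
  have hm : 1 ≤ m := Nat.le_floor (by simpa using Real.one_le_sqrt.mpr hn1)
  have hq_toReal : (ENNReal.ofReal q).toReal = q := ENNReal.toReal_ofReal hq.le
  calc eLpNorm (Zmax T v n) (ENNReal.ofReal q) μ
      ≤ ((m + 1 : ℕ) : ℝ≥0∞) ^ (1 / q) * eLpNorm (maxBirkhoff T v m) (ENNReal.ofReal q) μ := by
        simpa only [hq_toReal] using eLpNorm_Zmax_le hT hv (ENNReal.ofReal_ne_top (r := q)) n
    _ ≤ ((m + 1 : ℕ) : ℝ≥0∞) ^ (1 / q) * ENNReal.ofReal (K * (m : ℝ) ^ ((1 : ℝ) / 2)) := by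
        gcongr
        exact hmax m hm
    _ ≤ ENNReal.ofReal (2 ^ (1 / q) * K * (n : ℝ) ^ ((1 : ℝ) / 4 + 1 / (2 * q))) := by
        rw [← ENNReal.ofReal_natCast, ENNReal.ofReal_rpow_of_nonneg (by positivity) (by positivity),
          ← ENNReal.ofReal_mul (by positivity)]
        refine ENNReal.ofReal_le_ofReal ?_
        push_cast
        calc _ = K * (((m : ℝ) + 1) ^ (1 / q) * (m : ℝ) ^ ((1 : ℝ) / 2)) := by ring
          _ ≤ K * (2 ^ (1 / q) * (n : ℝ) ^ ((1 : ℝ) / 4 + 1 / (2 * q))) :=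
            mul_le_mul_of_nonneg_left (natFloor_sqrt_add_one_rpow_mul_le hn1 hq) hK.le
          _ = _ := by ring

/-- **Proposition 4.8(b).**  If `‖max_{ℓ≤n} |v_ℓ|‖_{L^q(μ)} ≤ K n^{1/2}` for all
`n ≥ 1` (for a measure-preserving `T` on a probability space and `q ≥ 1`), then
`‖Z_n‖_{L^q(μ)} ≤ C K n^{1/4 + 1/(2q)}` for all `n ≥ 1`, where `C > 0` depends
only on `q`. -/
theorem Zmax_Lq_estimate (q : ℝ) (hq : 1 ≤ q) :
    ∃ C : ℝ, 0 < C ∧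
      ∀ (Λ : Type) (mΛ : MeasurableSpace Λ) (μ : Measure Λ)
        (_ : IsProbabilityMeasure μ) (T : Λ → Λ) (_ : MeasurePreserving T μ μ)
        (v : Λ → ℝ) (_ : Measurable v) (K : ℝ) (_ : 0 < K),
        (∀ n : ℕ, 1 ≤ n →
          eLpNorm (fun x => (Finset.range (n+1)).sup' Finset.nonempty_range_add_one
              (fun ℓ => |birkhoff T v ℓ x|)) (ENNReal.ofReal q) μ
            ≤ ENNReal.ofReal (K * (n:ℝ) ^ ((1:ℝ)/2))) →
        ∀ n : ℕ, 1 ≤ n →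
          eLpNorm (Zmax T v n) (ENNReal.ofReal q) μ
            ≤ ENNReal.ofReal (C * K * (n:ℝ) ^ ((1:ℝ)/4 + 1/(2*q))) :=
  Zmax_Lq_estimate_general q
end
end

section
/- Let T : Λ → Λ be an ergodic measure-preserving transformation of a probability space (Λ, μ), v ∈ L^∞(Λ), and suppose b ≡ 1. Assume a_ε satisfies the regularity conditions, the moment conditions (5.1) and (5.2) hold with exponent q ≥ 1, and σ² > 0. Then there is a constant C > 0 such that for all ε ∈ (0, 1/2): ‖1_{B_ε} sup_{t∈[0,1]} |D_ε(t)|‖_{L^q(μ)} ≤ C ε^{1/3} (−log ε)^{1/4}, where B_ε = {sup_{t∈[0,1]} |x̂_ε(t)| ≤ Q_ε} and Q_ε = (−32 σ² log ε)^{1/2}. -/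
open MeasureTheory ProbabilityTheory Filter Topology

noncomputable section

/-- The space `C[0,1]` of continuous functions on `[0,1]` with the sup norm. -/
abbrev C01 := C(Set.Icc (0:ℝ) 1, ℝ)

/-- The Prokhorov distance between (the laws of) two random elements of `C[0,1]`,
defined on possibly different probability spaces:
`π₁(X,Y) = inf{ε > 0 : P(X ∈ A) ≤ Q(Y ∈ Aᵉ) + ε for all closed A}`. -/
def prokhorov {Ω₁ Ω₂ : Type*} [MeasurableSpace Ω₁] [MeasurableSpace Ω₂]
    (P : Measure Ω₁) (Q : Measure Ω₂) (X : Ω₁ → C01) (Y : Ω₂ → C01) : ℝ :=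
  sInf {ε : ℝ | 0 < ε ∧ ∀ A : Set C01, IsClosed A →
    P (X ⁻¹' A) ≤ Q (Y ⁻¹' Metric.thickening ε A) + ENNReal.ofReal ε}

/-- Evaluation of `u ∈ C[0,1]` at an arbitrary real time (clamped to `[0,1]`). -/
def ev (u : C01) (s : ℝ) : ℝ := u (Set.projIcc (0:ℝ) 1 (by norm_num) s)

/-- The slow variables of the fast-slow system
`x_ε(n+1) = x_ε(n) + ε² a_ε(x_ε(n), y(n)) + ε b(x_ε(n)) v(y(n))`, `x_ε(0) = ξ`,
where `y(n) = Tⁿ y`. -/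
def slow {Λ : Type*} (a : ℝ → ℝ → Λ → ℝ) (b : ℝ → ℝ) (v : Λ → ℝ) (T : Λ → Λ)
    (ξ ε : ℝ) (y : Λ) : ℕ → ℝ
  | 0 => ξ
  | n+1 => slow a b v T ξ ε y n + ε^2 * a ε (slow a b v T ξ ε y n) (T^[n] y)
      + ε * b (slow a b v T ξ ε y n) * v (T^[n] y)

/-- `ā(x) = ∫ a₀(x,y) dμ(y)`. -/
def abar {Λ : Type*} [MeasurableSpace Λ] (μ : Measure Λ) (a : ℝ → ℝ → Λ → ℝ) (x : ℝ) : ℝ :=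
  ∫ y, a 0 x y ∂μ

/-- `ã(x,y) = a₀(x,y) − ā(x)`. -/
def atil {Λ : Type*} [MeasurableSpace Λ] (μ : Measure Λ) (a : ℝ → ℝ → Λ → ℝ)
    (x : ℝ) (y : Λ) : ℝ :=
  a 0 x y - abar μ a x

/-- `J_ε(n) = ε^{4/3} ∑_{j=nM}^{(n+1)M−1} ã(x_ε(nM), Tʲy)` with `M = ⌊ε^{-4/3}⌋`. -/
def Jeps {Λ : Type*} [MeasurableSpace Λ] (μ : Measure Λ) (a : ℝ → ℝ → Λ → ℝ)
    (b : ℝ → ℝ) (v : Λ → ℝ) (T : Λ → Λ) (ξ ε : ℝ) (y : Λ) (n : ℕ) : ℝ :=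
  ε ^ ((4:ℝ)/3) * ∑ j ∈ Finset.Ico (n * ⌊ε ^ (-((4:ℝ)/3))⌋₊) ((n+1) * ⌊ε ^ (-((4:ℝ)/3))⌋₊),
    atil μ a (slow a b v T ξ ε y (n * ⌊ε ^ (-((4:ℝ)/3))⌋₊)) (T^[j] y)

/-- `D_ε(t) = ε^{2/3} ∑_{n<⌊t ε^{-2/3}⌋} J_ε(n)`. -/
def Deps {Λ : Type*} [MeasurableSpace Λ] (μ : Measure Λ) (a : ℝ → ℝ → Λ → ℝ)
    (b : ℝ → ℝ) (v : Λ → ℝ) (T : Λ → Λ) (ξ ε : ℝ) (y : Λ) (t : ℝ) : ℝ :=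
  ε ^ ((2:ℝ)/3) * ∑ n ∈ Finset.range ⌊t * ε ^ (-((2:ℝ)/3))⌋₊, Jeps μ a b v T ξ ε y n

/-!
On `B_ε` every `x_ε(nM)` with `n < ⌊ε^{-2/3}⌋` lies in `[-Q_ε, Q_ε]`, because `nMε² ≤ 1` is a time
in `[0,1]`. Since `ã` is `2L`-Lipschitz in `x`, replacing `x_ε(nM)` in `J_ε(n)` by the nearest point
`u` of a grid of mesh `δ` on `[-Q_ε, Q_ε]` costs `2Lδ` in total, and the remaining block sums
`∑_{block} ã_u ∘ Tʲ` are dominated by their sum over all `≤ ε^{-2/3} (2Q_ε/δ + 2)` blocks and grid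
points. Each of them has `L^q` norm `≤ C M^{1/2}` by (5.1) and the invariance of `μ`, so the triangle
inequality gives `‖1_{B_ε} sup |D_ε|‖_q ≲ δ + Q_ε ε^{2/3}/δ + ε^{2/3}`; the choice
`δ = Q_ε^{1/2} ε^{1/3} ≍ ε^{1/3} (-log ε)^{1/4}` balances the first two terms.
-/
open Finset
open scoped ENNReal

section Averaging

variable {Λ : Type*} [MeasurableSpace Λ] {μ : Measure Λ} [IsProbabilityMeasure μ]
  {a : ℝ → ℝ → Λ → ℝ} {L : ℝ}

theorem abs_abar_sub_le (hint : ∀ x, Integrable (a 0 x) μ)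
    (hlip : ∀ x x' y, |a 0 x y - a 0 x' y| ≤ L * |x - x'|) (x x' : ℝ) :
    |abar μ a x - abar μ a x'| ≤ L * |x - x'| := by
  rw [abar, abar, ← integral_sub (hint x) (hint x')]
  simpa using norm_integral_le_of_norm_le_const (μ := μ)
    (f := fun y => a 0 x y - a 0 x' y) (Eventually.of_forall (hlip x x'))

theorem abs_atil_sub_le (hint : ∀ x, Integrable (a 0 x) μ)
    (hlip : ∀ x x' y, |a 0 x y - a 0 x' y| ≤ L * |x - x'|) (x x' : ℝ) (y : Λ) :
    |atil μ a x y - atil μ a x' y| ≤ 2 * L * |x - x'| := by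
  have hsplit : atil μ a x y - atil μ a x' y
      = (a 0 x y - a 0 x' y) - (abar μ a x - abar μ a x') := by
    simp only [atil]; ring
  rw [hsplit]
  linarith [abs_sub (a 0 x y - a 0 x' y) (abar μ a x - abar μ a x'), hlip x x' y,
    abs_abar_sub_le hint hlip x x']

end Averaging

def gridPoint (Q δ : ℝ) (k : ℕ) : ℝ := -Q + k * δ

def gridSize (Q δ : ℝ) : ℕ := ⌈2 * Q / δ⌉₊ + 1

theorem exists_abs_sub_gridPoint_le {Q δ x : ℝ} (hδ : 0 < δ) (hx : |x| ≤ Q) :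
    ∃ k < gridSize Q δ, |x - gridPoint Q δ k| ≤ δ := by
  obtain ⟨hxl, hxu⟩ := abs_le.mp hx
  have hx0 : 0 ≤ (x + Q) / δ := div_nonneg (by linarith) hδ.le
  refine ⟨⌊(x + Q) / δ⌋₊, ?_, ?_⟩
  · calc ⌊(x + Q) / δ⌋₊ ≤ ⌊2 * Q / δ⌋₊ := Nat.floor_mono (by gcongr; linarith)
      _ ≤ ⌈2 * Q / δ⌉₊ := Nat.floor_le_ceil _
      _ < gridSize Q δ := Nat.lt_succ_self _
  · have hlow := (le_div_iff₀ hδ).mp (Nat.floor_le hx0)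
    have hup := (div_lt_iff₀ hδ).mp (Nat.lt_floor_add_one ((x + Q) / δ))
    rw [gridPoint, abs_le]
    constructor <;> nlinarith

theorem gridSize_le {Q δ : ℝ} (hQ : 0 ≤ Q) (hδ : 0 < δ) : (gridSize Q δ : ℝ) ≤ 2 * Q / δ + 2 := by
  have := Nat.ceil_lt_add_one (by positivity : 0 ≤ 2 * Q / δ)
  rw [gridSize]
  push_cast
  linarith

theorem abs_sum_le_gridPoint {ι : Type*} (s : Finset ι) {F : ℝ → ι → ℝ} {K Q δ x : ℝ}
    (hK : 0 ≤ K) (hF : ∀ u u' i, |F u i - F u' i| ≤ K * |u - u'|) (hδ : 0 < δ) (hx : |x| ≤ Q) :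
    |∑ i ∈ s, F x i| ≤ K * δ * #s + ∑ k ∈ range (gridSize Q δ), |∑ i ∈ s, F (gridPoint Q δ k) i| := by
  obtain ⟨k, hk, hxk⟩ := exists_abs_sub_gridPoint_le hδ hx
  have hdiff : |∑ i ∈ s, (F x i - F (gridPoint Q δ k) i)| ≤ K * δ * #s := by
    calc |∑ i ∈ s, (F x i - F (gridPoint Q δ k) i)|
        ≤ ∑ i ∈ s, |F x i - F (gridPoint Q δ k) i| := abs_sum_le_sum_abs _ _
      _ ≤ ∑ _i ∈ s, K * δ := sum_le_sum fun i _ => (hF _ _ i).trans (by gcongr)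
      _ = K * δ * #s := by rw [sum_const, nsmul_eq_mul, mul_comm]
  have hmem : |∑ i ∈ s, F (gridPoint Q δ k) i|
      ≤ ∑ k ∈ range (gridSize Q δ), |∑ i ∈ s, F (gridPoint Q δ k) i| :=
    single_le_sum (f := fun k => |∑ i ∈ s, F (gridPoint Q δ k) i|) (fun _ _ => abs_nonneg _)
      (mem_range.mpr hk)
  calc |∑ i ∈ s, F x i|
      = |∑ i ∈ s, (F x i - F (gridPoint Q δ k) i) + ∑ i ∈ s, F (gridPoint Q δ k) i| := by
        rw [← sum_add_distrib]; simp
    _ ≤ _ := (abs_add_le _ _).trans (add_le_add hdiff hmem)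

theorem card_Ico_block (M n : ℕ) : #(Ico (n * M) ((n + 1) * M)) = M := by
  rw [Nat.card_Ico, add_one_mul, Nat.add_sub_cancel_left]

def blockSum {Λ : Type*} (T : Λ → Λ) (f : Λ → ℝ) (M n : ℕ) (y : Λ) : ℝ :=
  ∑ j ∈ Ico (n * M) ((n + 1) * M), f (T^[j] y)

theorem blockSum_eq_birkhoff_comp {Λ : Type*} (T : Λ → Λ) (f : Λ → ℝ) (M n : ℕ) :
    blockSum T f M n = birkhoff T f M ∘ T^[n * M] := by
  funext y
  rw [blockSum, sum_Ico_eq_sum_range, ← Nat.card_Ico, card_Ico_block]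
  simp only [birkhoff, Function.comp_apply, ← Function.iterate_add_apply, add_comm]

section Blocks

variable {Λ : Type*} [MeasurableSpace Λ] {μ : Measure Λ} {T : Λ → Λ} {f : Λ → ℝ}

theorem measurable_birkhoff_s15 (hT : Measurable T) (hf : Measurable f) (M : ℕ) :
    Measurable (birkhoff T f M) :=
  Finset.measurable_sum _ fun j _ => hf.comp (hT.iterate j)

theorem measurable_blockSum (hT : Measurable T) (hf : Measurable f) (M n : ℕ) :
    Measurable (blockSum T f M n) := by
  rw [blockSum_eq_birkhoff_comp]
  exact (measurable_birkhoff_s15 hT hf M).comp (hT.iterate _)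

theorem eLpNorm_blockSum (hT : MeasurePreserving T μ μ) (hf : Measurable f) (M n : ℕ)
    (p : ℝ≥0∞) : eLpNorm (blockSum T f M n) p μ = eLpNorm (birkhoff T f M) p μ := by
  rw [blockSum_eq_birkhoff_comp, eLpNorm_comp_measurePreserving
    (measurable_birkhoff_s15 hT.measurable hf M).aestronglyMeasurable (hT.iterate _)]

end Blocks

theorem eLpNorm_sum_le_card_mul {Λ ι E : Type*} [MeasurableSpace Λ] {μ : Measure Λ}
    [NormedAddCommGroup E] {s : Finset ι} {f : ι → Λ → E} {p : ℝ≥0∞} (hp : 1 ≤ p)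
    (hf : ∀ i ∈ s, AEStronglyMeasurable (f i) μ) {B : ℝ≥0∞}
    (hB : ∀ i ∈ s, eLpNorm (f i) p μ ≤ B) : eLpNorm (∑ i ∈ s, f i) p μ ≤ #s * B :=
  (eLpNorm_sum_le hf hp).trans ((sum_le_card_nsmul _ _ _ hB).trans_eq (nsmul_eq_mul _ _))

section GridBlocks

variable {Λ : Type*} [MeasurableSpace Λ] {μ : Measure Λ} {a : ℝ → ℝ → Λ → ℝ} {T : Λ → Λ}

def gridBlockSum (μ : Measure Λ) (a : ℝ → ℝ → Λ → ℝ) (T : Λ → Λ) (Q δ : ℝ) (M N : ℕ)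
    (y : Λ) : ℝ :=
  ∑ n ∈ range N, ∑ k ∈ range (gridSize Q δ), |blockSum T (atil μ a (gridPoint Q δ k)) M n y|

theorem measurable_atil (hameas : ∀ x, Measurable (a 0 x)) (x : ℝ) :
    Measurable (atil μ a x) :=
  (hameas x).sub_const _

theorem measurable_gridBlockSum (hT : Measurable T) (hameas : ∀ x, Measurable (a 0 x))
    (Q δ : ℝ) (M N : ℕ) : Measurable (gridBlockSum μ a T Q δ M N) :=
  Finset.measurable_sum _ fun n _ => Finset.measurable_sum _ fun _ _ =>
    (measurable_blockSum hT (measurable_atil hameas _) M n).abs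

theorem eLpNorm_gridBlockSum_le (hT : MeasurePreserving T μ μ)
    (hameas : ∀ x, Measurable (a 0 x)) {p : ℝ≥0∞} (hp : 1 ≤ p) {Q δ : ℝ} {M N : ℕ}
    {B : ℝ≥0∞} (hmom : ∀ u, eLpNorm (birkhoff T (atil μ a u) M) p μ ≤ B) :
    eLpNorm (gridBlockSum μ a T Q δ M N) p μ ≤ N * gridSize Q δ * B := by
  have hmeas : ∀ n k, Measurable fun y => |blockSum T (atil μ a (gridPoint Q δ k)) M n y| :=
    fun n k => (measurable_blockSum hT.measurable (measurable_atil hameas _) M n).abs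
  have hsum : gridBlockSum μ a T Q δ M N = ∑ n ∈ range N, ∑ k ∈ range (gridSize Q δ),
      fun y => |blockSum T (atil μ a (gridPoint Q δ k)) M n y| := by
    funext y
    simp only [gridBlockSum, Finset.sum_apply]
  rw [hsum, mul_assoc]
  refine (eLpNorm_sum_le_card_mul hp (fun n _ => ?_) fun n _ => ?_).trans_eq (by rw [card_range])
  · rw [Finset.sum_fn]
    exact (Finset.measurable_sum _ fun k _ => hmeas n k).aestronglyMeasurable
  refine (eLpNorm_sum_le_card_mul hp (fun k _ => (hmeas n k).aestronglyMeasurable)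
    fun k _ => ?_).trans_eq (by rw [card_range])
  calc eLpNorm (fun y => |blockSum T (atil μ a (gridPoint Q δ k)) M n y|) p μ
      = eLpNorm (blockSum T (atil μ a (gridPoint Q δ k)) M n) p μ := by
        simpa only [Real.norm_eq_abs] using eLpNorm_norm (blockSum T _ M n)
    _ = eLpNorm (birkhoff T (atil μ a (gridPoint Q δ k)) M) p μ :=
        eLpNorm_blockSum hT (measurable_atil hameas _) M n p
    _ ≤ B := hmom _

end GridBlocks

def blockLen (ε : ℝ) : ℕ := ⌊ε ^ (-((4:ℝ)/3))⌋₊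

def blockCount (ε : ℝ) : ℕ := ⌊ε ^ (-((2:ℝ)/3))⌋₊

theorem one_le_blockLen {ε : ℝ} (hε0 : 0 < ε) (hε1 : ε ≤ 1) : 1 ≤ blockLen ε :=
  Nat.le_floor (by exact_mod_cast Real.one_le_rpow_of_pos_of_le_one_of_nonpos hε0 hε1 (by norm_num))

theorem blockCount_mul_blockLen_mul_sq_le_one {ε : ℝ} (hε : 0 < ε) :
    (blockCount ε * blockLen ε : ℝ) * ε ^ 2 ≤ 1 := by
  have hN : (blockCount ε : ℝ) ≤ ε ^ (-((2:ℝ)/3)) := Nat.floor_le (by positivity)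
  have hM : (blockLen ε : ℝ) ≤ ε ^ (-((4:ℝ)/3)) := Nat.floor_le (by positivity)
  calc (blockCount ε * blockLen ε : ℝ) * ε ^ 2 ≤ ε ^ (-((2:ℝ)/3)) * ε ^ (-((4:ℝ)/3)) * ε ^ 2 := by
        gcongr
    _ = 1 := by
        rw [← Real.rpow_add hε, ← Real.rpow_natCast, ← Real.rpow_add hε]
        norm_num

theorem abs_slow_le_of_iSup_abs_le {Λ : Type*} {a : ℝ → ℝ → Λ → ℝ} {b : ℝ → ℝ} {v : Λ → ℝ}
    {T : Λ → Λ} {ξ ε Q : ℝ} {y : Λ} {X : C01}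
    (hX : ∀ t : Set.Icc (0:ℝ) 1, X t = slow a b v T ξ ε y ⌊(t:ℝ)/ε^2⌋₊
        + ((t:ℝ)/ε^2 - (⌊(t:ℝ)/ε^2⌋₊ : ℝ)) *
          (slow a b v T ξ ε y (⌊(t:ℝ)/ε^2⌋₊ + 1) - slow a b v T ξ ε y ⌊(t:ℝ)/ε^2⌋₊))
    (hε : 0 < ε) {m : ℕ} (hm : (m : ℝ) * ε ^ 2 ≤ 1) (hQ : ⨆ t, |X t| ≤ Q) :
    |slow a b v T ξ ε y m| ≤ Q := by
  let t : Set.Icc (0:ℝ) 1 := ⟨m * ε ^ 2, by positivity, hm⟩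
  have hXt : X t = slow a b v T ξ ε y m := by
    rw [hX t, show (t : ℝ) / ε ^ 2 = m from mul_div_cancel_right₀ _ (by positivity),
      Nat.floor_natCast]
    ring
  have hbdd : BddAbove (Set.range fun t => |X t|) :=
    (isCompact_range (continuous_abs.comp X.continuous)).bddAbove
  exact hXt ▸ (le_ciSup hbdd t).trans hQ

section SlowPath

variable {Λ : Type*} [MeasurableSpace Λ] {μ : Measure Λ} {a : ℝ → ℝ → Λ → ℝ} {b : ℝ → ℝ}
  {v : Λ → ℝ} {T : Λ → Λ} {ξ ε K Q δ : ℝ} {y : Λ}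

variable (hK : 0 ≤ K) (hlip : ∀ x x' y, |atil μ a x y - atil μ a x' y| ≤ K * |x - x'|)
  (hδ : 0 < δ)
include hK hlip hδ

theorem abs_Jeps_le (hε : 0 ≤ ε) {n : ℕ} (hx : |slow a b v T ξ ε y (n * blockLen ε)| ≤ Q) :
    |Jeps μ a b v T ξ ε y n| ≤ ε ^ ((4:ℝ)/3) * (K * δ * blockLen ε
      + ∑ k ∈ range (gridSize Q δ), |blockSum T (atil μ a (gridPoint Q δ k)) (blockLen ε) n y|) := by
  rw [Jeps, ← blockLen, abs_mul, abs_of_nonneg (by positivity)]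
  gcongr
  simpa only [card_Ico_block, blockSum] using abs_sum_le_gridPoint (Ico (n * blockLen ε) ((n + 1) * blockLen ε))
    (F := fun u j => atil μ a u (T^[j] y)) hK (fun u u' j => hlip u u' _) hδ hx

theorem abs_Deps_le (hε : 0 < ε) {t : ℝ} (ht : t ≤ 1)
    (hx : ∀ n < blockCount ε, |slow a b v T ξ ε y (n * blockLen ε)| ≤ Q) :
    |Deps μ a b v T ξ ε y t| ≤ ε ^ 2 * (blockCount ε * blockLen ε * K * δ
      + gridBlockSum μ a T Q δ (blockLen ε) (blockCount ε) y) := by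
  have hN : ⌊t * ε ^ (-((2:ℝ)/3))⌋₊ ≤ blockCount ε :=
    Nat.floor_mono (mul_le_of_le_one_left (by positivity) ht)
  have hε2 : ε ^ ((2:ℝ)/3) * ε ^ ((4:ℝ)/3) = ε ^ 2 := by
    rw [← Real.rpow_add hε, ← Real.rpow_natCast]; norm_num
  rw [Deps, abs_mul, abs_of_nonneg (by positivity)]
  calc ε ^ ((2:ℝ)/3) * |∑ n ∈ range ⌊t * ε ^ (-((2:ℝ)/3))⌋₊, Jeps μ a b v T ξ ε y n|
      ≤ ε ^ ((2:ℝ)/3) * ∑ n ∈ range (blockCount ε), |Jeps μ a b v T ξ ε y n| := by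
        gcongr
        exact (abs_sum_le_sum_abs _ _).trans
          (sum_le_sum_of_subset_of_nonneg (range_subset_range.mpr hN) fun _ _ _ => abs_nonneg _)
    _ ≤ ε ^ ((2:ℝ)/3) * ∑ n ∈ range (blockCount ε), ε ^ ((4:ℝ)/3) * (K * δ * blockLen ε
      + ∑ k ∈ range (gridSize Q δ), |blockSum T (atil μ a (gridPoint Q δ k)) (blockLen ε) n y|) := by
        gcongr with n hn
        exact abs_Jeps_le hK hlip hδ hε.le (hx n (mem_range.mp hn))
    _ = _ := by
        rw [← mul_sum, ← mul_assoc, hε2, sum_add_distrib, sum_const, card_range, nsmul_eq_mul,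
          gridBlockSum]
        ring

theorem norm_indicator_iSup_abs_Deps_le (hε : 0 < ε) {B : Set Λ}
    (hB : ∀ y ∈ B, ∀ m : ℕ, (m : ℝ) * ε ^ 2 ≤ 1 → |slow a b v T ξ ε y m| ≤ Q) (y : Λ) :
    ‖B.indicator (fun y => ⨆ t : Set.Icc (0:ℝ) 1, |Deps μ a b v T ξ ε y t|) y‖
      ≤ K * δ + ε ^ 2 * gridBlockSum μ a T Q δ (blockLen ε) (blockCount ε) y := by
  have hg : 0 ≤ gridBlockSum μ a T Q δ (blockLen ε) (blockCount ε) y :=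
    sum_nonneg fun _ _ => sum_nonneg fun _ _ => abs_nonneg _
  by_cases hy : y ∈ B
  · have hNM := blockCount_mul_blockLen_mul_sq_le_one hε
    have hx : ∀ n < blockCount ε, |slow a b v T ξ ε y (n * blockLen ε)| ≤ Q :=
      fun n hn => hB y hy _ <| by
        calc ((n * blockLen ε : ℕ) : ℝ) * ε ^ 2 ≤ (blockCount ε * blockLen ε : ℝ) * ε ^ 2 := by
              push_cast; gcongr
          _ ≤ 1 := hNM
    rw [Set.indicator_of_mem hy, Real.norm_of_nonneg (Real.iSup_nonneg fun _ => abs_nonneg _)]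
    refine ciSup_le fun t => (abs_Deps_le hK hlip hδ hε t.2.2 hx).trans ?_
    nlinarith [mul_le_mul_of_nonneg_left hNM (by positivity : 0 ≤ K * δ)]
  · rw [Set.indicator_of_notMem hy, norm_zero]
    positivity

end SlowPath

theorem eLpNorm_indicator_iSup_abs_Deps_le {Λ : Type*} [MeasurableSpace Λ] {μ : Measure Λ}
    [IsProbabilityMeasure μ] {a : ℝ → ℝ → Λ → ℝ} {b : ℝ → ℝ} {v : Λ → ℝ} {T : Λ → Λ}
    {ξ ε K Q δ Cm : ℝ} {p : ℝ≥0∞} (hT : MeasurePreserving T μ μ)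
    (hameas : ∀ x, Measurable (a 0 x)) (hK : 0 ≤ K)
    (hlip : ∀ x x' y, |atil μ a x y - atil μ a x' y| ≤ K * |x - x'|) (hp : 1 ≤ p) (hCm : 0 ≤ Cm)
    (hmom : ∀ u (n : ℕ), 1 ≤ n →
      eLpNorm (birkhoff T (atil μ a u) n) p μ ≤ ENNReal.ofReal (Cm * (n : ℝ) ^ ((1:ℝ)/2)))
    (hε0 : 0 < ε) (hε1 : ε ≤ 1) (hδ : 0 < δ) {B : Set Λ}
    (hB : ∀ y ∈ B, ∀ m : ℕ, (m : ℝ) * ε ^ 2 ≤ 1 → |slow a b v T ξ ε y m| ≤ Q) :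
    eLpNorm (B.indicator fun y => ⨆ t : Set.Icc (0:ℝ) 1, |Deps μ a b v T ξ ε y t|) p μ
      ≤ ENNReal.ofReal (K * δ + ε ^ 2 * (blockCount ε * gridSize Q δ
          * (Cm * (blockLen ε : ℝ) ^ ((1:ℝ)/2)))) := by
  set N := blockCount ε
  set M := blockLen ε
  set g := gridBlockSum μ a T Q δ M N
  have hpoint := norm_indicator_iSup_abs_Deps_le hK hlip hδ hε0 hB
  have hg : eLpNorm g p μ ≤ N * gridSize Q δ * ENNReal.ofReal (Cm * (M : ℝ) ^ ((1:ℝ)/2)) :=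
    eLpNorm_gridBlockSum_le hT hameas hp fun u => hmom u M (one_le_blockLen hε0 hε1)
  have hgmeas : AEStronglyMeasurable g μ :=
    (measurable_gridBlockSum hT.measurable hameas Q δ M N).aestronglyMeasurable
  calc _ ≤ eLpNorm ((fun _ => K * δ) + ε ^ 2 • g) p μ := eLpNorm_mono_real hpoint
    _ ≤ eLpNorm (fun _ : Λ => K * δ) p μ + eLpNorm (ε ^ 2 • g) p μ :=
        eLpNorm_add_le aestronglyMeasurable_const (hgmeas.const_smul _) hp
    _ ≤ ENNReal.ofReal (K * δ) + ENNReal.ofReal (ε ^ 2) * (N * gridSize Q δ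
          * ENNReal.ofReal (Cm * (M : ℝ) ^ ((1:ℝ)/2))) := by
        rw [eLpNorm_const _ (by positivity) (NeZero.ne μ), eLpNorm_const_smul, measure_univ,
          ENNReal.one_rpow, mul_one, Real.enorm_of_nonneg (by positivity),
          Real.enorm_of_nonneg (by positivity)]
        gcongr
    _ = _ := by
        rw [ENNReal.ofReal_add (by positivity) (by positivity), ENNReal.ofReal_mul (p := ε ^ 2)
          (by positivity), ENNReal.ofReal_mul (p := N * gridSize Q δ) (by positivity),
          ENNReal.ofReal_mul (p := N) (by positivity), ENNReal.ofReal_natCast,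
          ENNReal.ofReal_natCast]

theorem discretisation_error_le {ε R K Cm : ℝ} (hε0 : 0 < ε) (hε1 : ε ≤ 1) (hR : 0 < R) (hCm : 0 ≤ Cm) :
    K * (R * ε ^ ((1:ℝ)/3)) + ε ^ 2 * (blockCount ε * gridSize (R ^ 2) (R * ε ^ ((1:ℝ)/3))
        * (Cm * (blockLen ε : ℝ) ^ ((1:ℝ)/2)))
      ≤ (K * R + 2 * Cm * R + 2 * Cm) * ε ^ ((1:ℝ)/3) := by
  set r := ε ^ ((1:ℝ)/3) with hr
  have hr0 : 0 < r := by positivity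
  have hr1 : r ≤ 1 := Real.rpow_le_one hε0.le hε1 (by norm_num)
  have hε2 : ε ^ 2 = r ^ 6 := by
    rw [hr, ← Real.rpow_mul_natCast hε0.le]; norm_num
  have hN : (blockCount ε : ℝ) ≤ (r ^ 2)⁻¹ := by
    refine (Nat.floor_le (by positivity)).trans_eq ?_
    rw [hr, ← Real.rpow_mul_natCast hε0.le, ← Real.rpow_neg hε0.le]; norm_num
  have hM : (blockLen ε : ℝ) ^ ((1:ℝ)/2) ≤ (r ^ 2)⁻¹ := by
    have hM' : (blockLen ε : ℝ) ≤ ((r ^ 2)⁻¹) ^ 2 := by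
      refine (Nat.floor_le (by positivity)).trans_eq ?_
      rw [hr, ← Real.rpow_mul_natCast hε0.le, ← Real.rpow_neg hε0.le,
        ← Real.rpow_mul_natCast (by positivity)]
      norm_num
    calc (blockLen ε : ℝ) ^ ((1:ℝ)/2) ≤ (((r ^ 2)⁻¹) ^ 2) ^ ((1:ℝ)/2) := by gcongr
      _ = (r ^ 2)⁻¹ := by
        rw [← Real.rpow_natCast, ← Real.rpow_mul (by positivity)]; norm_num
  have hP : (gridSize (R ^ 2) (R * r) : ℝ) ≤ 2 * R / r + 2 := by
    have := gridSize_le (sq_nonneg R) (mul_pos hR hr0)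
    rwa [show 2 * R ^ 2 / (R * r) = 2 * R / r by field_simp] at this
  have hcount : ε ^ 2 * (blockCount ε * gridSize (R ^ 2) (R * r) * (Cm * (blockLen ε : ℝ) ^ ((1:ℝ)/2)))
      ≤ Cm * (2 * R * r + 2 * r ^ 2) := by
    calc _ ≤ r ^ 6 * ((r ^ 2)⁻¹ * (2 * R / r + 2) * (Cm * (r ^ 2)⁻¹)) := by
          rw [hε2]; gcongr
      _ = Cm * (2 * R * r + 2 * r ^ 2) := by field_simp
  nlinarith [mul_le_mul_of_nonneg_left hr1 (by positivity : 0 ≤ 2 * Cm * r)]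

theorem add_le_mul_neg_log_rpow {ε s c₀ c₁ : ℝ} (hε0 : 0 < ε) (hε : ε < 1 / 2) (hs : 0 ≤ s)
    (hc₀ : 0 ≤ c₀) :
    c₁ * (s * -Real.log ε) ^ ((1:ℝ)/4) + c₀
      ≤ (c₁ * s ^ ((1:ℝ)/4) + c₀ / Real.log 2 ^ ((1:ℝ)/4)) * (-Real.log ε) ^ ((1:ℝ)/4) := by
  have hlog2 : 0 < Real.log 2 := Real.log_pos one_lt_two
  have hlog : Real.log 2 ≤ -Real.log ε := by
    rw [← Real.log_inv]
    exact Real.log_le_log two_pos (by rw [le_inv_comm₀ two_pos hε0]; linarith)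
  have hroot : Real.log 2 ^ ((1:ℝ)/4) ≤ (-Real.log ε) ^ ((1:ℝ)/4) := by gcongr
  rw [Real.mul_rpow hs (hlog2.le.trans hlog), add_mul, div_mul_eq_mul_div, ← mul_assoc]
  gcongr
  rw [le_div_iff₀ (by positivity)]
  gcongr

theorem Deps_estimate_general
    {Λ : Type} [MeasurableSpace Λ] (μ : Measure Λ) [IsProbabilityMeasure μ]
    (T : Λ → Λ) (hT : MeasurePreserving T μ μ)
    (v : Λ → ℝ)
    -- the family `a_ε` and the regularity conditions (i)-(iii)
    (a : ℝ → ℝ → Λ → ℝ) (hameas : ∀ ε x, Measurable (a ε x))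
    (Ca : ℝ) (hreg1 : ∀ ε ∈ Set.Icc (0:ℝ) 1, ∀ (x : ℝ) (y : Λ), |a ε x y| ≤ Ca)
    (L : ℝ) (hL : 0 ≤ L)
    (hreg3 : ∀ (x x' : ℝ) (y : Λ), |a 0 x y - a 0 x' y| ≤ L * |x - x'|)
    (ξ : ℝ)
    -- `x̂_ε(t) = x_ε(t ε⁻²)`, linearly interpolated, as a random element of `C[0,1]`
    (Xhat : ℝ → Λ → C01)
    (hXhat : ∀ ε ∈ Set.Ioo (0:ℝ) 1, ∀ (y : Λ) (t : Set.Icc (0:ℝ) 1),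
      Xhat ε y t = slow a (fun _ => (1:ℝ)) v T ξ ε y ⌊(t:ℝ)/ε^2⌋₊
        + ((t:ℝ)/ε^2 - (⌊(t:ℝ)/ε^2⌋₊ : ℝ)) *
          (slow a (fun _ => (1:ℝ)) v T ξ ε y (⌊(t:ℝ)/ε^2⌋₊ + 1) - slow a (fun _ => (1:ℝ)) v T ξ ε y ⌊(t:ℝ)/ε^2⌋₊))
    (q : ℝ) (hq : 1 ≤ q) (Cm : ℝ)
    -- moment condition (5.1)
    (h51 : ∀ (u : ℝ) (n : ℕ), 1 ≤ n →
      eLpNorm (fun y => ∑ j ∈ Finset.range n, atil μ a u (T^[j] y)) (ENNReal.ofReal q) μ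
        ≤ ENNReal.ofReal (Cm * (n:ℝ) ^ ((1:ℝ)/2)))
    (σ2 : ℝ)
    (hσ2pos : 0 < σ2) :
    ∃ C : ℝ, 0 < C ∧ ∀ ε ∈ Set.Ioo (0:ℝ) (1/2:ℝ),
      eLpNorm (Set.indicator
          {y : Λ | (⨆ t : Set.Icc (0:ℝ) 1, |Xhat ε y t|)
              ≤ (-32 * σ2 * Real.log ε) ^ ((1:ℝ)/2)}
          (fun y => ⨆ t : Set.Icc (0:ℝ) 1,
            |Deps μ a (fun _ => (1:ℝ)) v T ξ ε y (t:ℝ)|))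
        (ENNReal.ofReal q) μ
      ≤ ENNReal.ofReal (C * ε ^ ((1:ℝ)/3) * (-Real.log ε) ^ ((1:ℝ)/4)) := by
  have hint : ∀ x, Integrable (a 0 x) μ := fun x =>
    .of_bound (hameas 0 x).aestronglyMeasurable Ca (.of_forall (hreg1 0 ⟨le_rfl, zero_le_one⟩ x))
  have hmom : ∀ u (n : ℕ), 1 ≤ n → eLpNorm (birkhoff T (atil μ a u) n) (ENNReal.ofReal q) μ
      ≤ ENNReal.ofReal (max Cm 0 * (n : ℝ) ^ ((1:ℝ)/2)) := fun u n hn =>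
    (h51 u n hn).trans (ENNReal.ofReal_le_ofReal (by gcongr; exact le_max_left _ _))
  refine ⟨(2 * L + 2 * max Cm 0) * (32 * σ2) ^ ((1:ℝ)/4) + 2 * max Cm 0 / Real.log 2 ^ ((1:ℝ)/4) + 1,
    by positivity, fun ε ⟨hε0, hε⟩ => ?_⟩
  have hε1 : ε < 1 := by linarith
  have hℓ : 0 < -Real.log ε := neg_pos.mpr (Real.log_neg hε0 hε1)
  set R := (32 * σ2 * -Real.log ε) ^ ((1:ℝ)/4)
  have hQ : (-32 * σ2 * Real.log ε) ^ ((1:ℝ)/2) = R ^ 2 := by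
    rw [← Real.rpow_mul_natCast (mul_pos (by positivity) hℓ).le]
    ring_nf
  rw [hQ]
  calc _ ≤ ENNReal.ofReal (2 * L * (R * ε ^ ((1:ℝ)/3)) + ε ^ 2 * (blockCount ε
          * gridSize (R ^ 2) (R * ε ^ ((1:ℝ)/3)) * (max Cm 0 * (blockLen ε : ℝ) ^ ((1:ℝ)/2)))) :=
        eLpNorm_indicator_iSup_abs_Deps_le hT (hameas 0) (by positivity) (abs_atil_sub_le hint hreg3)
          (ENNReal.one_le_ofReal.mpr hq) (le_max_right _ _) hmom hε0 hε1.le (by positivity)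
          fun y hy m hm => abs_slow_le_of_iSup_abs_le (hXhat ε ⟨hε0, hε1⟩ y) hε0 hm hy
    _ ≤ ENNReal.ofReal ((2 * L * R + 2 * max Cm 0 * R + 2 * max Cm 0) * ε ^ ((1:ℝ)/3)) :=
        ENNReal.ofReal_le_ofReal (discretisation_error_le hε0 hε1.le (by positivity) (le_max_right _ _))
    _ ≤ _ := by
        have hlog := add_le_mul_neg_log_rpow (c₁ := 2 * L + 2 * max Cm 0) hε0 hε (by positivity : 0 ≤ 32 * σ2)
          (by positivity : 0 ≤ 2 * max Cm 0)
        have hr : 0 ≤ ε ^ ((1:ℝ)/3) := by positivity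
        have hℓ' : 0 ≤ (-Real.log ε) ^ ((1:ℝ)/4) := Real.rpow_nonneg hℓ.le _
        refine ENNReal.ofReal_le_ofReal ?_
        nlinarith [mul_le_mul_of_nonneg_right hlog hr, mul_nonneg hr hℓ']

/-- **Lemma 5.7 (estimate on `D_ε`, case `b ≡ 1`).**
With `B_ε = {sup_{[0,1]} |x̂_ε| ≤ Q_ε}` and `Q_ε = (−32 σ² log ε)^{1/2}`,
`‖1_{B_ε} sup_{[0,1]} |D_ε|‖_{L^q(μ)} ≤ C ε^{1/3} (−log ε)^{1/4}`. -/
theorem Deps_estimate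
    {Λ : Type} [MeasurableSpace Λ] (μ : Measure Λ) [IsProbabilityMeasure μ]
    (T : Λ → Λ) (hT : MeasurePreserving T μ μ) (hTerg : Ergodic T μ)
    -- `v ∈ L^∞(Λ)`
    (v : Λ → ℝ) (hvmeas : Measurable v) (Kv : ℝ) (hvbd : ∀ y, |v y| ≤ Kv)
    -- the family `a_ε` and the regularity conditions (i)-(iii)
    (a : ℝ → ℝ → Λ → ℝ) (hameas : ∀ ε x, Measurable (a ε x))
    (Ca : ℝ) (hreg1 : ∀ ε ∈ Set.Icc (0:ℝ) 1, ∀ (x : ℝ) (y : Λ), |a ε x y| ≤ Ca)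
    (Creg : ℝ) (hreg2 : ∀ ε ∈ Set.Ioo (0:ℝ) 1, ∀ (x : ℝ) (y : Λ),
      |a ε x y - a 0 x y| ≤ Creg * ε ^ ((1:ℝ)/3))
    (L : ℝ) (hL : 0 ≤ L)
    (hreg3 : ∀ (x x' : ℝ) (y : Λ), |a 0 x y - a 0 x' y| ≤ L * |x - x'|)
    (ξ : ℝ)
    -- `x̂_ε(t) = x_ε(t ε⁻²)`, linearly interpolated, as a random element of `C[0,1]`
    (Xhat : ℝ → Λ → C01)
    (hXhat : ∀ ε ∈ Set.Ioo (0:ℝ) 1, ∀ (y : Λ) (t : Set.Icc (0:ℝ) 1),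
      Xhat ε y t = slow a (fun _ => (1:ℝ)) v T ξ ε y ⌊(t:ℝ)/ε^2⌋₊
        + ((t:ℝ)/ε^2 - (⌊(t:ℝ)/ε^2⌋₊ : ℝ)) *
          (slow a (fun _ => (1:ℝ)) v T ξ ε y (⌊(t:ℝ)/ε^2⌋₊ + 1) - slow a (fun _ => (1:ℝ)) v T ξ ε y ⌊(t:ℝ)/ε^2⌋₊))
    (q : ℝ) (hq : 1 ≤ q) (Cm : ℝ)
    -- moment condition (5.1)
    (h51 : ∀ (u : ℝ) (n : ℕ), 1 ≤ n →
      eLpNorm (fun y => ∑ j ∈ Finset.range n, atil μ a u (T^[j] y)) (ENNReal.ofReal q) μ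
        ≤ ENNReal.ofReal (Cm * (n:ℝ) ^ ((1:ℝ)/2)))
    -- moment condition (5.2)
    (h52 : ∀ n : ℕ, 1 ≤ n →
      eLpNorm (birkhoff T v n) (ENNReal.ofReal q) μ
        ≤ ENNReal.ofReal (Cm * (n:ℝ) ^ ((1:ℝ)/2)))
    (σ2 : ℝ)
    (hσ2 : Tendsto (fun n : ℕ => (n:ℝ)⁻¹ * ∫ y, (birkhoff T v n y)^2 ∂μ) atTop (𝓝 σ2))
    (hσ2pos : 0 < σ2) :
    ∃ C : ℝ, 0 < C ∧ ∀ ε ∈ Set.Ioo (0:ℝ) (1/2:ℝ),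
      eLpNorm (Set.indicator
          {y : Λ | (⨆ t : Set.Icc (0:ℝ) 1, |Xhat ε y t|)
              ≤ (-32 * σ2 * Real.log ε) ^ ((1:ℝ)/2)}
          (fun y => ⨆ t : Set.Icc (0:ℝ) 1,
            |Deps μ a (fun _ => (1:ℝ)) v T ξ ε y (t:ℝ)|))
        (ENNReal.ofReal q) μ
      ≤ ENNReal.ofReal (C * ε ^ ((1:ℝ)/3) * (-Real.log ε) ^ ((1:ℝ)/4)) :=
  Deps_estimate_general μ T hT v a hameas Ca hreg1 L hL hreg3 ξ Xhat hXhat q hq Cm h51 σ2 hσ2pos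
end
end
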